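/- arXiv:1508.04387 — 3 statements merged into one kernel-verified Lean document; each statement's English description precedes it below -/
import Mathlib

section
/- Every Friedberg numbering of 𝒫⁽¹⁾ is minimal among computable numberings of 𝒫⁽¹⁾ with respect to reducibility: if ν is a Friedberg numbering and μ is a computable numbering of 𝒫⁽¹⁾ with μ ≤ ν, then ν ≤ μ. -/
/-!
A reduction `f` witnessing `μ ≤ ν` is onto: every `ν n` is some `μ m = ν (f m)`, and `ν` is
injective. Searching for the least preimage under `f` is then a computable right inverse `g`
of `f`, and `ν n = ν (f (g n)) = μ (g n)`.
-/

/-- The set of all partial computable functions ℕ ⇀ ℕ. -/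
def PCF : Set (ℕ →. ℕ) := {f | Nat.Partrec f}

/-- ν is a numbering of A: every value lies in A and ν is onto A. -/
def IsNumbering (A : Set (ℕ →. ℕ)) (ν : ℕ → ℕ →. ℕ) : Prop :=
  (∀ i, ν i ∈ A) ∧ ∀ f ∈ A, ∃ i, ν i = f

/-- A computable numbering: (i,x) ↦ ν i x is partial computable. -/
def IsCompNumbering (A : Set (ℕ →. ℕ)) (ν : ℕ → ℕ →. ℕ) : Prop :=
  IsNumbering A ν ∧ Partrec₂ ν

/-- A Friedberg numbering: computable and injective. -/
def IsFriedberg (A : Set (ℕ →. ℕ)) (ν : ℕ → ℕ →. ℕ) : Prop :=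
  IsCompNumbering A ν ∧ Function.Injective ν

/-- ν is reducible to μ via a total computable function. -/
def Reducible (ν μ : ℕ → ℕ →. ℕ) : Prop :=
  ∃ f : ℕ → ℕ, Computable f ∧ ∀ n, ν n = μ (f n)

/-- g is a subfunction of f (graph inclusion). -/
def Subfn (g f : ℕ →. ℕ) : Prop := ∀ x y, y ∈ g x → y ∈ f x

/-- g is a finite subfunction of f. -/
def FinSubfn (g f : ℕ →. ℕ) : Prop := g.Dom.Finite ∧ Subfn g f

/-- A sequence of numberings is uniformly c.e. -/
def UniformlyCE (ν : ℕ → ℕ → ℕ →. ℕ) : Prop :=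
  Partrec₂ (fun p : ℕ × ℕ => ν p.1 p.2)

theorem Computable.nat_find {α : Type*} [Primcodable α] {p : α → ℕ → Prop}
    [∀ a, DecidablePred (p a)] (hp : Computable₂ fun a n => decide (p a n))
    (H : ∀ a, ∃ n, p a n) : Computable fun a => Nat.find (H a) := by
  refine Partrec.of_eq_tot (Partrec.rfind hp.partrec₂) fun a => Nat.mem_rfind.2 ⟨?_, ?_⟩
  · simpa using Nat.find_spec (H a)
  · intro m hm
    simpa using Nat.find_min (H a) hm

theorem Computable.exists_rightInverse_of_surjective {β : Type*} [Primcodable β]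
    [DecidableEq β] {f : ℕ → β} (hf : Computable f) (hs : Function.Surjective f) :
    ∃ g : β → ℕ, Computable g ∧ Function.RightInverse g f :=
  ⟨fun b => Nat.find (hs b),
    Computable.nat_find (p := fun b n => f n = b)
      (Primrec.eq.decide.to_comp.comp (hf.comp .snd) .fst) hs,
    fun b => Nat.find_spec (hs b)⟩

theorem surjective_of_reduction_to_injective {A : Set (ℕ →. ℕ)} {μ ν : ℕ → ℕ →. ℕ}
    {f : ℕ → ℕ} (hμ : ∀ φ ∈ A, ∃ i, μ i = φ) (hν : ∀ i, ν i ∈ A)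
    (hinj : Function.Injective ν) (hf : ∀ n, μ n = ν (f n)) : Function.Surjective f := by
  intro n
  obtain ⟨m, hm⟩ := hμ (ν n) (hν n)
  exact ⟨m, hinj (by rw [← hf, hm])⟩

/-- Every Friedberg numbering of 𝒫⁽¹⁾ is minimal under reducibility. -/
theorem friedberg_minimal (ν μ : ℕ → ℕ →. ℕ)
    (hν : IsFriedberg PCF ν) (hμ : IsCompNumbering PCF μ)
    (h : Reducible μ ν) : Reducible ν μ := by
  obtain ⟨f, hf, hμν⟩ := h
  have hsurj : Function.Surjective f :=
    surjective_of_reduction_to_injective hμ.1.2 hν.1.1.1 hν.2 hμν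
  obtain ⟨g, hg, hfg⟩ := hf.exists_rightInverse_of_surjective hsurj
  exact ⟨g, hg, fun n => by rw [hμν, hfg n]⟩
end

section
/- The set 𝒪 of all odd partial functions (partial functions ℕ ⇀ ℕ whose domain is finite of odd cardinality) that are (trivially) computable has a Friedberg numbering. -/
/-- The set of odd partial functions: finite domain of odd cardinality. -/
def OddPF : Set (ℕ →. ℕ) := {f | f.Dom.Finite ∧ Odd f.Dom.ncard}

/-!
A finite partial function on `ℕ` is the lookup function of exactly one association list with
strictly increasing keys, and its domain has as many elements as the list. Recording each key by
its gap to the previous one identifies these lists with arbitrary lists of (gap, value) pairs, and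
an odd-length list `[a, b, c, …]` is a head `a` followed by the list of pairs `[(b, c), …]`. So the
odd partial functions are in bijection with the denumerable type
`(ℕ × ℕ) × List ((ℕ × ℕ) × (ℕ × ℕ))`, and every map in this chain is primitive recursive.
-/

namespace List

variable {α β : Type*}

def flattenPairs (l : List (α × α)) : List α := l.flatMap fun q => [q.1, q.2]

@[simp] lemma flattenPairs_nil : flattenPairs ([] : List (α × α)) = [] := rfl

@[simp] lemma flattenPairs_cons (q : α × α) (l : List (α × α)) :
    flattenPairs (q :: l) = q.1 :: q.2 :: flattenPairs l := rfl

lemma length_flattenPairs (l : List (α × α)) : (flattenPairs l).length = 2 * l.length := by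
  induction l with
  | nil => rfl
  | cons q l ih => simp only [flattenPairs_cons, length_cons, ih]; ring

lemma flattenPairs_injective : Function.Injective (flattenPairs (α := α)) := by
  intro l₁ l₂ h
  induction l₁ generalizing l₂ with
  | nil => cases l₂ <;> simp_all
  | cons q l₁ ih =>
    obtain _ | ⟨q', l₂⟩ := l₂
    · simp at h
    · simp only [flattenPairs_cons, cons.injEq] at h
      rw [Prod.ext h.1 h.2.1, ih h.2.2]

lemma exists_flattenPairs_eq : ∀ {l : List α}, Even l.length → ∃ ps, flattenPairs ps = l
  | [], _ => ⟨[], rfl⟩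
  | [_], h => by simp at h
  | a :: b :: l, h => by
    obtain ⟨ps, rfl⟩ := exists_flattenPairs_eq (l := l) (by simpa [parity_simps] using h)
    exact ⟨(a, b) :: ps, rfl⟩

def ofHeadPairs (x : α × List (α × α)) : List α := x.1 :: flattenPairs x.2

lemma ofHeadPairs_injective : Function.Injective (ofHeadPairs (α := α)) := by
  rintro ⟨a, ps⟩ ⟨b, qs⟩ h
  simp only [ofHeadPairs, cons.injEq] at h
  rw [h.1, flattenPairs_injective h.2]

lemma odd_length_ofHeadPairs (x : α × List (α × α)) : Odd (ofHeadPairs x).length := by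
  simp [ofHeadPairs, length_flattenPairs]

lemma exists_ofHeadPairs_eq {l : List α} (hl : Odd l.length) : ∃ x, ofHeadPairs x = l := by
  obtain _ | ⟨a, l⟩ := l
  · simp at hl
  · obtain ⟨ps, rfl⟩ := exists_flattenPairs_eq (l := l) (by simpa [parity_simps] using hl)
    exact ⟨(a, ps), rfl⟩

def ofGaps : ℕ → List (ℕ × β) → List (ℕ × β)
  | _, [] => []
  | b, p :: l => (b + p.1, p.2) :: ofGaps (b + p.1 + 1) l

@[simp] lemma ofGaps_nil (b : ℕ) : ofGaps b ([] : List (ℕ × β)) = [] := rfl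

@[simp] lemma ofGaps_cons (b : ℕ) (p : ℕ × β) (l : List (ℕ × β)) :
    ofGaps b (p :: l) = (b + p.1, p.2) :: ofGaps (b + p.1 + 1) l := rfl

lemma length_ofGaps (b : ℕ) (l : List (ℕ × β)) : (ofGaps b l).length = l.length := by
  induction l generalizing b with
  | nil => rfl
  | cons p l ih => simp [ih]

lemma le_fst_of_mem_ofGaps {b : ℕ} {l : List (ℕ × β)} {p : ℕ × β} (hp : p ∈ ofGaps b l) :
    b ≤ p.1 := by
  induction l generalizing b with
  | nil => simp at hp
  | cons q l ih =>
    obtain rfl | hp := mem_cons.1 hp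
    · exact Nat.le_add_right _ _
    · have := ih hp; omega

lemma pairwise_ofGaps (b : ℕ) (l : List (ℕ × β)) : (ofGaps b l).Pairwise (·.1 < ·.1) := by
  induction l generalizing b with
  | nil => exact .nil
  | cons q l ih =>
    refine .cons (fun p hp => ?_) (ih _)
    have := le_fst_of_mem_ofGaps hp; omega

lemma ofGaps_injective (b : ℕ) : Function.Injective (ofGaps (β := β) b) := by
  intro l₁ l₂ h
  induction l₁ generalizing b l₂ with
  | nil => cases l₂ <;> simp_all
  | cons p l₁ ih =>
    obtain _ | ⟨q, l₂⟩ := l₂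
    · simp at h
    · simp only [ofGaps_cons, cons.injEq, Prod.mk.injEq, Nat.add_left_cancel_iff] at h
      obtain ⟨⟨h₁, h₂⟩, h₃⟩ := h
      rw [h₁] at h₃
      rw [Prod.ext h₁ h₂, ih _ h₃]

lemma exists_ofGaps_eq {b : ℕ} {l : List (ℕ × β)} (hb : ∀ p ∈ l, b ≤ p.1)
    (hl : l.Pairwise (·.1 < ·.1)) : ∃ g, ofGaps b g = l := by
  induction l generalizing b with
  | nil => exact ⟨[], rfl⟩
  | cons p l ih =>
    obtain ⟨g, hg⟩ := ih (b := p.1 + 1) (fun q hq => rel_of_pairwise_cons hl hq) hl.of_cons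
    refine ⟨(p.1 - b, p.2) :: g, ?_⟩
    have : b + (p.1 - b) = p.1 := Nat.add_sub_cancel' (hb p mem_cons_self)
    simp [this, hg]

lemma ofGaps_eq_foldl (b : ℕ) (l : List (ℕ × β)) :
    ofGaps b l = (l.foldl (fun s p => (s.1 + p.1 + 1, s.2 ++ [(s.1 + p.1, p.2)])) (b, [])).2 := by
  suffices ∀ b acc, (l.foldl (fun s p => (s.1 + p.1 + 1, s.2 ++ [(s.1 + p.1, p.2)])) (b, acc)).2
      = acc ++ ofGaps b l from (this b []).symm
  induction l with
  | nil => simp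
  | cons p l ih => simp [ih]

section Lookup

variable [DecidableEq α]

lemma lookup_eq_some_iff_mem {l : List (α × β)} (hl : (l.map Prod.fst).Nodup) {a : α} {y : β} :
    l.lookup a = some y ↔ (a, y) ∈ l := by
  induction l with
  | nil => simp
  | cons p l ih =>
    obtain ⟨k, v⟩ := p
    rw [map_cons, nodup_cons] at hl
    by_cases hak : a = k
    · subst hak
      have : (a, y) ∉ l := fun h => hl.1 (mem_map.2 ⟨_, h, rfl⟩)
      simp [this, eq_comm]
    · simp [lookup_cons, beq_false_of_ne hak, hak, ih hl.2]

def lookupPFun (l : List (α × β)) : α →. β := fun a => l.lookup a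

lemma mem_lookupPFun_iff {l : List (α × β)} (hl : (l.map Prod.fst).Nodup) {a : α} {y : β} :
    y ∈ lookupPFun l a ↔ (a, y) ∈ l := by
  rw [lookupPFun, Part.mem_ofOption, Option.mem_def, lookup_eq_some_iff_mem hl]

lemma dom_lookupPFun {l : List (α × β)} (hl : (l.map Prod.fst).Nodup) :
    (lookupPFun l).Dom = ↑(l.map Prod.fst).toFinset := by
  ext a
  simp [mem_lookupPFun_iff hl]

lemma ncard_dom_lookupPFun {l : List (α × β)} (hl : (l.map Prod.fst).Nodup) :
    (lookupPFun l).Dom.ncard = l.length := by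
  rw [dom_lookupPFun hl, Set.ncard_coe_finset, toFinset_card_of_nodup hl, length_map]

end Lookup

lemma nodup_map_fst_of_pairwise {l : List (ℕ × β)} (hl : l.Pairwise (·.1 < ·.1)) :
    (l.map Prod.fst).Nodup :=
  (pairwise_map.2 hl).imp Nat.ne_of_lt

lemma lookupPFun_injOn :
    Set.InjOn (lookupPFun (α := ℕ) (β := β)) {l | l.Pairwise (·.1 < ·.1)} := by
  intro l₁ h₁ l₂ h₂ h
  refine h₁.eq_of_mem_iff h₂ fun ⟨a, y⟩ => ?_
  rw [← mem_lookupPFun_iff (nodup_map_fst_of_pairwise h₁),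
    ← mem_lookupPFun_iff (nodup_map_fst_of_pairwise h₂), h]

lemma exists_lookupPFun_eq {f : ℕ →. β} (hf : f.Dom.Finite) :
    ∃ l : List (ℕ × β), l.Pairwise (·.1 < ·.1) ∧ lookupPFun l = f := by
  classical
  set keys := hf.toFinset.sort (· ≤ ·)
  set l := keys.filterMap fun a => (f a).toOption.map (a, ·)
  have hl : l.Pairwise (·.1 < ·.1) := by
    refine (Finset.sortedLT_sort _).pairwise.filterMap _ ?_
    intro a b hab p hp q hq
    simp only [Option.map_eq_some_iff] at hp hq
    obtain ⟨_, _, rfl⟩ := hp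
    obtain ⟨_, _, rfl⟩ := hq
    exact hab
  refine ⟨l, hl, funext fun a => Part.ext fun y => ?_⟩
  rw [mem_lookupPFun_iff (nodup_map_fst_of_pairwise hl)]
  simp only [l, mem_filterMap, Option.map_eq_some_iff, Prod.mk.injEq]
  constructor
  · rintro ⟨_, _, _, hy, rfl, rfl⟩
    exact Part.mem_toOption.1 hy
  · intro hy
    have : a ∈ keys := (Finset.mem_sort _).2 (hf.mem_toFinset.2 (Part.dom_iff_mem.2 ⟨y, hy⟩))
    exact ⟨a, this, y, Part.mem_toOption.2 hy, rfl, rfl⟩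

end List

namespace Primrec

open List

variable {α β : Type*} [Primcodable α] [Primcodable β]

lemma list_flattenPairs : Primrec (flattenPairs (α := α)) :=
  list_flatMap .id <| list_cons.comp₂ (fst.comp₂ .right) <|
    list_cons.comp₂ (snd.comp₂ .right) (Primrec₂.const [])

lemma list_ofHeadPairs : Primrec (ofHeadPairs (α := α)) :=
  list_cons.comp fst (list_flattenPairs.comp snd)

lemma list_ofGaps : Primrec₂ (ofGaps (β := β)) := by
  have key : Primrec fun sp : (ℕ × List (ℕ × β)) × (ℕ × β) => sp.1.1 + sp.2.1 :=
    nat_add.comp (fst.comp fst) (fst.comp snd)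
  have step : Primrec fun sp : (ℕ × List (ℕ × β)) × (ℕ × β) =>
      (sp.1.1 + sp.2.1 + 1, sp.1.2 ++ [(sp.1.1 + sp.2.1, sp.2.2)]) :=
    pair (nat_add.comp key (const 1))
      (list_append.comp (snd.comp fst) (list_cons.comp (pair key (snd.comp snd)) (const [])))
  refine (snd.comp (list_foldl snd (pair fst (const [])) (step.comp₂ .right))).of_eq ?_
  rintro ⟨b, l⟩
  exact (ofGaps_eq_foldl b l).symm

end Primrec

namespace OddPF

open List

def code (n : ℕ) : List (ℕ × ℕ) :=
  ofGaps 0 (ofHeadPairs (Denumerable.ofNat ((ℕ × ℕ) × List ((ℕ × ℕ) × (ℕ × ℕ))) n))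

def numbering (n : ℕ) : ℕ →. ℕ := lookupPFun (code n)

lemma code_injective : Function.Injective code :=
  (ofGaps_injective 0).comp (ofHeadPairs_injective.comp (Denumerable.eqv _).symm.injective)

lemma pairwise_code (n : ℕ) : (code n).Pairwise (·.1 < ·.1) := pairwise_ofGaps 0 _

lemma odd_length_code (n : ℕ) : Odd (code n).length := by
  rw [code, length_ofGaps]
  exact odd_length_ofHeadPairs _

lemma exists_code_eq {l : List (ℕ × ℕ)} (hl : l.Pairwise (·.1 < ·.1)) (hodd : Odd l.length) :
    ∃ n, code n = l := by
  obtain ⟨g, rfl⟩ := exists_ofGaps_eq (b := 0) (fun _ _ => Nat.zero_le _) hl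
  obtain ⟨x, rfl⟩ := exists_ofHeadPairs_eq (by rwa [length_ofGaps] at hodd)
  exact ⟨Encodable.encode x, by rw [code, Denumerable.ofNat_encode]⟩

lemma primrec_code : Primrec code :=
  Primrec.list_ofGaps.comp (Primrec.const 0) (Primrec.list_ofHeadPairs.comp (Primrec.ofNat _))

lemma numbering_mem (n : ℕ) : numbering n ∈ OddPF := by
  have hnd := nodup_map_fst_of_pairwise (pairwise_code n)
  refine ⟨?_, ?_⟩
  · rw [numbering, dom_lookupPFun hnd]
    exact Finset.finite_toSet _
  · rw [numbering, ncard_dom_lookupPFun hnd]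
    exact odd_length_code n

lemma exists_numbering_eq {f : ℕ →. ℕ} (hf : f ∈ OddPF) : ∃ n, numbering n = f := by
  obtain ⟨l, hl, rfl⟩ := exists_lookupPFun_eq hf.1
  have hodd := hf.2
  rw [ncard_dom_lookupPFun (nodup_map_fst_of_pairwise hl)] at hodd
  obtain ⟨n, rfl⟩ := exists_code_eq hl hodd
  exact ⟨n, rfl⟩

lemma numbering_injective : Function.Injective numbering := fun _ _ h =>
  code_injective (lookupPFun_injOn (pairwise_code _) (pairwise_code _) h)

lemma partrec_numbering : Partrec₂ numbering :=
  Computable.ofOption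
    (Primrec.listLookup.comp Primrec.snd (primrec_code.comp Primrec.fst)).to_comp

end OddPF

/-- The odd partial functions have a Friedberg numbering. -/
theorem oddPF_friedberg_numbering : ∃ ν : ℕ → ℕ →. ℕ, IsFriedberg OddPF ν :=
  ⟨OddPF.numbering,
    ⟨⟨OddPF.numbering_mem, fun _ hf => OddPF.exists_numbering_eq hf⟩, OddPF.partrec_numbering⟩,
    OddPF.numbering_injective⟩
end

section
/- The set 𝒫⁽¹⁾ \ 𝒪 of all partial computable functions that are not odd (i.e., whose domain is infinite or finite of even cardinality) has a computable numbering. -/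
theorem Nat.exists_ge_apply_eq_of_le {f : ℕ → ℕ} (hf : ∀ s, f (s + 1) ≤ f s + 1) {a b n : ℕ}
    (hab : a ≤ b) (ha : f a ≤ n) (hb : n ≤ f b) : ∃ s, a ≤ s ∧ f s = n := by
  induction b, hab using Nat.le_induction with
  | base => exact ⟨a, le_rfl, le_antisymm ha hb⟩
  | succ b hab ih =>
    by_cases hn : n ≤ f b
    · exact ih hn
    · exact ⟨b + 1, hab.trans b.le_succ, by linarith [hf b]⟩

theorem Monotone.exists_coe_eq_iUnion_of_finite {α : Type*} {E : ℕ → Finset α}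
    (hmono : Monotone E) (hfin : (⋃ s, (E s : Set α)).Finite) :
    ∃ s, (E s : Set α) = ⋃ s, (E s : Set α) := by
  obtain ⟨s, hs⟩ := hmono.directed_le.exists_mem_subset_of_finset_subset_biUnion
    (s := hfin.toFinset) (by simp)
  simp only [Set.Finite.coe_toFinset, Set.iUnion_subset_iff, Finset.coe_subset] at hs
  exact ⟨s, (Set.subset_iUnion _ s).antisymm
    (Set.iUnion_subset fun i => Finset.coe_subset.2 (hs i))⟩

section Paired

variable {α : Type*} {E : ℕ → Finset α}

def Paired (E : ℕ → Finset α) : Set α := {x | ∃ s, x ∈ E s ∧ Even (E s).card}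

theorem paired_subset_iUnion : Paired E ⊆ ⋃ s, (E s : Set α) :=
  fun _ ⟨s, hx, _⟩ => Set.mem_iUnion.2 ⟨s, hx⟩

theorem mem_paired_of_card_lt (hmono : Monotone E)
    (hstep : ∀ s, (E (s + 1)).card ≤ (E s).card + 1) {x : α} {a b : ℕ} (hx : x ∈ E a)
    (hab : (E a).card < (E b).card) : x ∈ Paired E := by
  have hab' : a ≤ b := le_of_not_gt fun hba => hab.not_ge (Finset.card_le_card (hmono hba.le))
  obtain ⟨n, hn_even, hn_ge, hn_le⟩ : ∃ n, Even n ∧ (E a).card ≤ n ∧ n ≤ (E b).card := by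
    rcases Nat.even_or_odd (E a).card with h | h
    · exact ⟨_, h, le_rfl, hab.le⟩
    · exact ⟨_, h.add_one, Nat.le_succ _, hab⟩
  obtain ⟨s, has, hs⟩ :=
    Nat.exists_ge_apply_eq_of_le (f := fun s => (E s).card) hstep hab' hn_ge hn_le
  exact ⟨s, hmono has hx, hs ▸ hn_even⟩

theorem paired_eq_iUnion (hmono : Monotone E) (hstep : ∀ s, (E (s + 1)).card ≤ (E s).card + 1)
    (h : ¬ ((⋃ s, (E s : Set α)).Finite ∧ Odd (⋃ s, (E s : Set α)).ncard)) :
    Paired E = ⋃ s, (E s : Set α) := by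
  refine paired_subset_iUnion.antisymm fun x hx => ?_
  obtain ⟨a, hxa⟩ := Set.mem_iUnion.1 hx
  by_cases hfin : (⋃ s, (E s : Set α)).Finite
  · obtain ⟨b, hb⟩ := hmono.exists_coe_eq_iUnion_of_finite hfin
    have hodd : ¬ Odd (E b).card := by
      rw [← Set.ncard_coe_finset, hb]
      exact fun ho => h ⟨hfin, ho⟩
    exact ⟨b, Finset.mem_coe.1 (hb ▸ hx), Nat.not_odd_iff_even.1 hodd⟩
  · obtain ⟨z, hz, hza⟩ := Set.Infinite.exists_notMem_finset hfin (E a)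
    obtain ⟨b, hzb⟩ := Set.mem_iUnion.1 hz
    refine mem_paired_of_card_lt hmono hstep hxa (b := max a b) (Finset.card_lt_card ?_)
    exact Finset.ssubset_iff_subset_ne.2 ⟨hmono (le_max_left a b),
      fun he => hza (he ▸ hmono (le_max_right a b) hzb)⟩

theorem exists_paired_eq_iUnion_diff_singleton (hmono : Monotone E)
    (hstep : ∀ s, (E (s + 1)).card ≤ (E s).card + 1) (h0 : E 0 = ∅)
    (hfin : (⋃ s, (E s : Set α)).Finite) (hodd : Odd (⋃ s, (E s : Set α)).ncard) :
    ∃ m ∈ ⋃ s, (E s : Set α), Paired E = (⋃ s, (E s : Set α)) \ {m} := by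
  classical
  obtain ⟨b, hb⟩ := hmono.exists_coe_eq_iUnion_of_finite hfin
  rw [← hb] at hodd ⊢
  rw [Set.ncard_coe_finset] at hodd
  have hsub (t : ℕ) : E t ⊆ E b :=
    Finset.coe_subset.1 (hb ▸ Set.subset_iUnion (fun s => (E s : Set α)) t)
  -- `E a` is the stage just before the last element `m` appears.
  obtain ⟨a, -, ha⟩ := Nat.exists_ge_apply_eq_of_le (f := fun s => (E s).card) hstep
    (Nat.zero_le b) (by simp [h0]) (Nat.sub_le (E b).card 1)
  obtain ⟨m, hm⟩ : ∃ m, E b \ E a = {m} := by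
    rw [← Finset.card_eq_one, Finset.card_sdiff_of_subset (hsub a), ha]
    have := hodd.pos
    omega
  have hnew (y : α) : y ∈ E b ∧ y ∉ E a ↔ y = m := by
    rw [← Finset.mem_sdiff, hm, Finset.mem_singleton]
  obtain ⟨hmb, hma⟩ := (hnew m).2 rfl
  refine ⟨m, hmb, Set.Subset.antisymm ?_ ?_⟩
  · rintro x ⟨t, hxt, heven⟩
    refine ⟨hsub t hxt, fun hxm => ?_⟩
    rw [show x = m from hxm] at hxt
    have hat : a ≤ t := le_of_not_gt fun hta => hma (hmono hta.le hxt)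
    have hbt : E b ⊆ E t := fun y hy => by
      by_cases hya : y ∈ E a
      · exact hmono hat hya
      · rwa [(hnew y).1 ⟨hy, hya⟩]
    rw [(hsub t).antisymm hbt] at heven
    exact Nat.not_even_iff_odd.2 hodd heven
  · rintro x ⟨hxb, hxm⟩
    have hxa : x ∈ E a := by
      by_contra hxa
      exact hxm ((hnew x).1 ⟨hxb, hxa⟩)
    exact ⟨a, hxa, ha ▸ Nat.Odd.sub_odd hodd odd_one⟩

theorem not_odd_paired (hmono : Monotone E) (hstep : ∀ s, (E (s + 1)).card ≤ (E s).card + 1)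
    (h0 : E 0 = ∅) : ¬ ((Paired E).Finite ∧ Odd (Paired E).ncard) := by
  rintro ⟨hfin, hodd⟩
  by_cases hW : (⋃ s, (E s : Set α)).Finite ∧ Odd (⋃ s, (E s : Set α)).ncard
  · obtain ⟨m, hm, heq⟩ := exists_paired_eq_iUnion_diff_singleton hmono hstep h0 hW.1 hW.2
    rw [heq, Set.ncard_sdiff_singleton_of_mem hm] at hodd
    exact Nat.not_odd_iff_even.2 (Nat.Odd.sub_odd hW.2 odd_one) hodd
  · rw [paired_eq_iUnion hmono hstep hW] at hfin hodd
    exact hW ⟨hfin, hodd⟩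

end Paired

theorem primrecPred_even : PrimrecPred (Even : ℕ → Prop) :=
  (Primrec.eq.comp (Primrec.nat_mod.comp Primrec.id (Primrec.const 2)) (Primrec.const 0)).of_eq
    fun _ => Nat.even_iff.symm

namespace Nat.Partrec.Code

/-- Step `n` runs `c` on input `n.unpair.2` for `n.unpair.1` steps, so each step adds at most
one element to the domain enumerated so far. -/
def domStage (c : Code) (s : ℕ) : Finset ℕ :=
  (Finset.range s).filter fun x => ∃ n < s, n.unpair.2 = x ∧ (evaln n.unpair.1 c x).isSome

variable {c : Code} {s x : ℕ}

theorem mem_domStage :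
    x ∈ domStage c s ↔ ∃ n < s, n.unpair.2 = x ∧ (evaln n.unpair.1 c x).isSome := by
  rw [domStage, Finset.mem_filter, Finset.mem_range, and_iff_right_iff_imp]
  rintro ⟨n, hn, rfl, -⟩
  exact (Nat.unpair_right_le n).trans_lt hn

theorem domStage_mono : Monotone (domStage c) := fun _ _ hst _ hx => by
  obtain ⟨n, hn, hnx⟩ := mem_domStage.1 hx
  exact mem_domStage.2 ⟨n, hn.trans_le hst, hnx⟩

theorem domStage_zero : domStage c 0 = ∅ := rfl

theorem domStage_succ_subset : domStage c (s + 1) ⊆ insert s.unpair.2 (domStage c s) := by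
  intro x hx
  obtain ⟨n, hn, hnx⟩ := mem_domStage.1 hx
  rcases Nat.lt_succ_iff_lt_or_eq.1 hn with hn | rfl
  · exact Finset.mem_insert_of_mem (mem_domStage.2 ⟨n, hn, hnx⟩)
  · exact Finset.mem_insert.2 (Or.inl hnx.1.symm)

theorem card_domStage_succ_le : (domStage c (s + 1)).card ≤ (domStage c s).card + 1 :=
  (Finset.card_le_card domStage_succ_subset).trans (Finset.card_insert_le _ _)

theorem iUnion_domStage : ⋃ s, (domStage c s : Set ℕ) = (eval c).Dom := by
  ext x
  simp only [Set.mem_iUnion, Finset.mem_coe, mem_domStage, PFun.mem_dom]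
  constructor
  · rintro ⟨s, n, -, rfl, hn⟩
    obtain ⟨y, hy⟩ := Option.isSome_iff_exists.1 hn
    exact ⟨y, evaln_sound hy⟩
  · rintro ⟨y, hy⟩
    obtain ⟨k, hk⟩ := evaln_complete.1 hy
    refine ⟨Nat.pair k x + 1, Nat.pair k x, Nat.lt_succ_self _, by simp, ?_⟩
    simpa using Option.isSome_iff_exists.2 ⟨y, hk⟩

theorem primrecRel_enumerated : PrimrecRel fun (x : ℕ) (p : Code × ℕ) =>
    ∃ n < p.2, n.unpair.2 = x ∧ (evaln n.unpair.1 p.1 x).isSome := by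
  have hrun : PrimrecRel fun (n : ℕ) (q : ℕ × Code) =>
      n.unpair.2 = q.1 ∧ (evaln n.unpair.1 q.2 q.1).isSome :=
    (Primrec.eq.comp (Primrec.snd.comp (Primrec.unpair.comp Primrec.fst))
      (Primrec.fst.comp Primrec.snd)).and
    (Primrec.eq.comp (Primrec.option_isSome.comp (primrec_evaln.comp
      (((Primrec.fst.comp (Primrec.unpair.comp Primrec.fst)).pair
        (Primrec.snd.comp Primrec.snd)).pair (Primrec.fst.comp Primrec.snd))))
      (_root_.Primrec.const true))
  exact (hrun.exists_mem_list.comp (Primrec.list_range.comp (Primrec.snd.comp Primrec.snd))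
    (Primrec.fst.pair (Primrec.fst.comp Primrec.snd))).of_eq fun q => by simp

theorem primrecRel_mem_domStage :
    PrimrecRel fun (p : Code × ℕ) (s : ℕ) => p.2 ∈ domStage p.1 s :=
  (primrecRel_enumerated.comp (Primrec.snd.comp Primrec.fst)
    ((Primrec.fst.comp Primrec.fst).pair Primrec.snd)).of_eq fun _ => mem_domStage.symm

theorem primrec_card_domStage : Primrec₂ fun (c : Code) (s : ℕ) => (domStage c s).card :=
  Primrec.list_length.comp (primrecRel_enumerated.listFilter.comp
    (Primrec.list_range.comp Primrec.snd) _root_.Primrec.id)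

def pairedEval (c : Code) : ℕ →. ℕ := fun x =>
  (Nat.rfind fun s => Part.some (decide (x ∈ domStage c s ∧ Even (domStage c s).card))).bind
    fun _ => eval c x

theorem mem_pairedEval {y : ℕ} :
    y ∈ pairedEval c x ↔ x ∈ Paired (domStage c) ∧ y ∈ eval c x := by
  simp only [pairedEval, Part.mem_bind_iff]
  constructor
  · rintro ⟨s, hs, hy⟩
    exact ⟨⟨s, by simpa using Nat.rfind_spec hs⟩, hy⟩
  · rintro ⟨⟨s, hs⟩, hy⟩
    obtain ⟨n, hn, -⟩ := Nat.rfind_min'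
      (p := fun s => decide (x ∈ domStage c s ∧ Even (domStage c s).card)) (by simpa using hs)
    exact ⟨n, hn, hy⟩

theorem dom_pairedEval : (pairedEval c).Dom = Paired (domStage c) := by
  ext x
  rw [PFun.mem_dom]
  refine ⟨fun ⟨y, hy⟩ => (mem_pairedEval.1 hy).1, fun hx => ?_⟩
  have hdom : x ∈ (eval c).Dom := iUnion_domStage ▸ paired_subset_iUnion hx
  obtain ⟨y, hy⟩ := (PFun.mem_dom _ _).1 hdom
  exact ⟨y, mem_pairedEval.2 ⟨hx, hy⟩⟩

theorem pairedEval_notMem_oddPF : pairedEval c ∉ OddPF := by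
  change ¬ ((pairedEval c).Dom.Finite ∧ _)
  rw [dom_pairedEval]
  exact not_odd_paired domStage_mono (fun _ => card_domStage_succ_le) domStage_zero

theorem pairedEval_eq_of_notMem_oddPF (h : eval c ∉ OddPF) : pairedEval c = eval c := by
  change ¬ ((eval c).Dom.Finite ∧ _) at h
  have hpaired : Paired (domStage c) = (eval c).Dom := by
    rw [← iUnion_domStage] at h ⊢
    exact paired_eq_iUnion domStage_mono (fun _ => card_domStage_succ_le) h
  funext x
  ext y
  rw [mem_pairedEval, hpaired, and_iff_right_iff_imp]
  exact fun hy => (PFun.mem_dom _ _).2 ⟨y, hy⟩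

theorem partrec_pairedEval : Partrec₂ pairedEval := by
  have hstage : PrimrecRel fun (p : Code × ℕ) (s : ℕ) =>
      p.2 ∈ domStage p.1 s ∧ Even (domStage p.1 s).card :=
    primrecRel_mem_domStage.and (primrecPred_even.comp
      (primrec_card_domStage.comp (Primrec.fst.comp Primrec.fst) Primrec.snd))
  exact ((_root_.Partrec.rfind hstage.decide.to_comp.partrec₂).bind
    (eval_part.comp (Computable.fst.comp Computable.fst)
      (Computable.snd.comp Computable.fst)).to₂).of_eq fun _ => rfl

end Nat.Partrec.Code

open Nat.Partrec Code

/-- The non-odd partial computable functions have a computable numbering. -/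
theorem nonOdd_computable_numbering :
    ∃ ν : ℕ → ℕ →. ℕ, IsCompNumbering (PCF \ OddPF) ν := by
  have hν : Partrec₂ fun e => pairedEval (Denumerable.ofNat Code e) :=
    partrec_pairedEval.comp ((Computable.ofNat Code).comp Computable.fst) Computable.snd
  refine ⟨_, ⟨fun e => ⟨?_, pairedEval_notMem_oddPF⟩, fun f hf => ?_⟩, hν⟩
  · exact Partrec.nat_iff.1 (hν.comp (Computable.const e) Computable.id)
  · obtain ⟨c, rfl⟩ := exists_code.1 hf.1
    exact ⟨Encodable.encode c, by
      rw [Denumerable.ofNat_encode, pairedEval_eq_of_notMem_oddPF hf.2]⟩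
end
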